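/- Let k = ℓ = 1 (so p = 1). Suppose u, v : J → ℂ solve the transformed system (S') on an open interval J ⊆ (−1,1), that |u(y)| = |v(y)| ≠ 0 for all y ∈ J, and that θ : J → ℝ is a continuous function with conj(u(y))·v(y) = |u(y)|·|v(y)|·exp(i·θ(y)) for all y ∈ J. Then |v| and θ are continuously differentiable on J and satisfy (d/dy)|v(y)| = 2·|v(y)|³·sin(θ(y))·(1−y²)^(−3/2) and θ'(y) = 8·|v(y)|²·cos(θ(y))·(1−y²)^(−3/2) for all y ∈ J. -/

import Mathlib

open Set Complex Filter Topology

/-- `Q(y) = |u(y)|² (1+y)⁻¹ + |v(y)|² (1-y)⁻¹` (case `p = 1`). -/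
noncomputable def Qfun (u v : ℝ → ℂ) (y : ℝ) : ℝ :=
  ‖u y‖ ^ 2 * (1 + y)⁻¹ + ‖v y‖ ^ 2 * (1 - y)⁻¹

/-- `r(y) = u(y) conj(v(y)) + conj(u(y)) v(y)`. -/
noncomputable def rfun (u v : ℝ → ℂ) (y : ℝ) : ℂ :=
  u y * (starRingEnd ℂ) (v y) + (starRingEnd ℂ) (u y) * v y

/-- `(u, v)` solves the transformed system (S') with `k = ℓ = 1` (so `p = 1`) on `J`:
`u, v` are continuously differentiable on `J` and for all `y ∈ J`,
`i (1+y)^{1/2} u' = Q v (1-y)^{-1/2} + r (1-y²)^{-1/2} u (1+y)^{-1/2}` and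
`-i (1-y)^{1/2} v' = Q u (1+y)^{-1/2} + r (1-y²)^{-1/2} v (1-y)^{-1/2}`. -/
def SolvesS'11 (u v : ℝ → ℂ) (J : Set ℝ) : Prop :=
  ContDiffOn ℝ 1 u J ∧ ContDiffOn ℝ 1 v J ∧
  ∀ y ∈ J,
    Complex.I * (((1 + y) ^ ((1 / 2 : ℝ)) : ℝ) : ℂ) * deriv u y
      = ((Qfun u v y : ℝ) : ℂ) * v y * (((1 - y) ^ (-(1 / 2) : ℝ) : ℝ) : ℂ)
        + rfun u v y * (((1 - y ^ 2) ^ (-(1 / 2) : ℝ) : ℝ) : ℂ) * u y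
          * (((1 + y) ^ (-(1 / 2) : ℝ) : ℝ) : ℂ) ∧
    -Complex.I * (((1 - y) ^ ((1 / 2 : ℝ)) : ℝ) : ℂ) * deriv v y
      = ((Qfun u v y : ℝ) : ℂ) * u y * (((1 + y) ^ (-(1 / 2) : ℝ) : ℝ) : ℂ)
        + rfun u v y * (((1 - y ^ 2) ^ (-(1 / 2) : ℝ) : ℝ) : ℂ) * v y
          * (((1 - y) ^ (-(1 / 2) : ℝ) : ℝ) : ℂ)


/-!
Along the solution `v / u = e^{iθ}`, `Q = 2|v|² (1 - y²)⁻¹` and `r = 2|v|² cos θ`, so solving (S')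
for the logarithmic derivatives gives `v'/v` and `u'/u` explicitly. For a nonvanishing
differentiable `w` with continuous phase `θ`, a local branch of `log (w t / w y)` shows
`|w|' = |w| Re (w'/w)` and `θ' = Im (w'/w)`; apply this to `w = v` and to `w = conj(u) v`, whose
logarithmic derivative is `conj (u'/u) + v'/v`.
-/

theorem HasDerivAt.clog_div_self {w : ℝ → ℂ} {w' : ℂ} {y : ℝ} (hw : HasDerivAt w w' y)
    (hy : w y ≠ 0) : HasDerivAt (fun t => Complex.log (w t / w y)) (w' / w y) y := by
  simpa [hy] using (hw.div_const (w y)).clog_real (by simp [hy])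

theorem HasDerivAt.norm {w : ℝ → ℂ} {w' : ℂ} {y : ℝ} (hw : HasDerivAt w w' y) (hy : w y ≠ 0) :
    HasDerivAt (fun t => ‖w t‖) (‖w y‖ * (w' / w y).re) y := by
  have hexp := ((reCLM.hasFDerivAt.comp_hasDerivAt y (hw.clog_div_self hy)).exp).const_mul ‖w y‖
  simp only [Function.comp_def, reCLM_apply, div_self hy, log_one, zero_re, Real.exp_zero,
    one_mul] at hexp
  refine hexp.congr_of_eventuallyEq ?_
  filter_upwards [hw.continuousAt.eventually_ne hy] with t ht
  rw [log_re, Real.exp_log (norm_pos_iff.mpr (div_ne_zero ht hy)), norm_div]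
  field_simp [norm_ne_zero_iff.mpr hy]

theorem HasDerivAt.polar_angle {w : ℝ → ℂ} {w' : ℂ} {θ : ℝ → ℝ} {y : ℝ}
    (hw : HasDerivAt w w' y) (hy : w y ≠ 0) (hθ : ContinuousAt θ y)
    (hpolar : ∀ᶠ t in 𝓝 y, w t = ‖w t‖ * Complex.exp (θ t * I)) :
    HasDerivAt θ (w' / w y).im y := by
  have him := (imCLM.hasFDerivAt.comp_hasDerivAt y (hw.clog_div_self hy)).add_const (θ y)
  simp only [Function.comp_def, imCLM_apply] at him
  refine him.congr_of_eventuallyEq ?_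
  -- `arg` inverts `exp (· * I)` only on `(-π, π]`: this is where continuity of `θ` enters.
  have hnear : ∀ᶠ t in 𝓝 y, θ t ∈ Ioo (θ y - Real.pi) (θ y + Real.pi) :=
    hθ (Ioo_mem_nhds (by linarith [Real.pi_pos]) (by linarith [Real.pi_pos]))
  filter_upwards [hnear, hpolar, hw.continuousAt.eventually_ne hy] with t hθt ht ht0
  have hquot : w t / w y = ((‖w t‖ / ‖w y‖ : ℝ) : ℂ) * Complex.exp ((θ t - θ y : ℝ) * I) := by
    conv_lhs => rw [ht, hpolar.self_of_nhds]
    rw [ofReal_sub, sub_mul, Complex.exp_sub, ofReal_div]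
    ring
  rw [log_im, hquot, arg_real_mul _ (div_pos (norm_pos_iff.mpr ht0) (norm_pos_iff.mpr hy)),
    exp_mul_I, arg_cos_add_sin_mul_I ⟨by linarith [hθt.1], by linarith [hθt.2]⟩]
  ring

theorem star_mul_add_star_mul_div_star_mul {K : Type*} [Field K] [StarRing K] {a b a' b' : K}
    (ha : a ≠ 0) (hb : b ≠ 0) :
    (star a' * b + star a * b') / (star a * b) = star (a' / a) + b' / b := by
  have := star_ne_zero.mpr ha
  rw [star_div₀]
  field_simp

theorem Complex.inv_cos_add_sin_mul_I (θ : ℝ) :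
    ((Real.cos θ : ℂ) + Real.sin θ * I)⁻¹ = Real.cos θ - Real.sin θ * I := by
  refine inv_eq_of_mul_eq_one_right ?_
  linear_combination (-(Real.sin θ : ℂ) ^ 2) * I_sq
    + (by exact_mod_cast Real.cos_sq_add_sin_sq θ : (Real.cos θ : ℂ) ^ 2 + (Real.sin θ : ℂ) ^ 2 = 1)

theorem Complex.div_eq_cos_add_sin_mul_I {z w : ℂ} {θ : ℝ} (hz : z ≠ 0) (hzw : ‖z‖ = ‖w‖)
    (h : (starRingEnd ℂ) z * w = ((‖z‖ * ‖w‖ : ℝ) : ℂ) * Complex.exp (I * θ)) :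
    w / z = Real.cos θ + Real.sin θ * I := by
  have hz' : (‖z‖ : ℂ) ≠ 0 := ofReal_ne_zero.mpr (norm_ne_zero_iff.mpr hz)
  rw [← mul_div_mul_left w z ((map_ne_zero (starRingEnd ℂ)).mpr hz), h, conj_mul', ← hzw,
    ofReal_cos, ofReal_sin, ← exp_mul_I, mul_comm I]
  push_cast
  field_simp

theorem Real.rpow_neg_half_sq {x : ℝ} (hx : 0 ≤ x) : (x ^ (-(1 / 2) : ℝ)) ^ 2 = x⁻¹ := by
  rw [← Real.rpow_mul_natCast hx]; norm_num [Real.rpow_neg_one]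

theorem Real.rpow_neg_three_halves {x : ℝ} (hx : 0 ≤ x) :
    x ^ (-(3 / 2) : ℝ) = (x ^ (-(1 / 2) : ℝ)) ^ 3 := by
  rw [← Real.rpow_mul_natCast hx]; norm_num

theorem inv_one_add_add_inv_one_sub {y : ℝ} (hy : y ∈ Ioo (-1 : ℝ) 1) :
    (1 + y)⁻¹ + (1 - y)⁻¹ = 2 * ((1 - y ^ 2) ^ (-(1 / 2) : ℝ)) ^ 2 := by
  have hp : 0 < 1 + y := by linarith [hy.1]
  have hm : 0 < 1 - y := by linarith [hy.2]
  rw [Real.rpow_neg_half_sq (by nlinarith), show 1 - y ^ 2 = (1 + y) * (1 - y) by ring]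
  field_simp
  ring

theorem rfun_eq_two_mul_re (u v : ℝ → ℂ) (y : ℝ) :
    rfun u v y = (2 * ((starRingEnd ℂ) (u y) * v y).re : ℝ) := by
  rw [rfun, ← add_conj, map_mul, Complex.conj_conj, mul_comm (u y), add_comm]

section SolvesS'11

variable {u v : ℝ → ℂ} {J : Set ℝ} {y : ℝ}

theorem SolvesS'11.deriv_eq (hS : SolvesS'11 u v J) (hy : y ∈ J) (hy1 : y ∈ Ioo (-1 : ℝ) 1) :
    deriv u y = -I * ((1 - y ^ 2) ^ (-(1 / 2) : ℝ) : ℝ)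
        * (Qfun u v y * v y + rfun u v y * ((1 + y)⁻¹ : ℝ) * u y) ∧
      deriv v y = I * ((1 - y ^ 2) ^ (-(1 / 2) : ℝ) : ℝ)
        * (Qfun u v y * u y + rfun u v y * ((1 - y)⁻¹ : ℝ) * v y) := by
  obtain ⟨hu, hv⟩ := hS.2.2 y hy
  have hp : 0 < 1 + y := by linarith [hy1.1]
  have hm : 0 < 1 - y := by linarith [hy1.2]
  have hC : (1 - y ^ 2) ^ (-(1 / 2) : ℝ) = (1 + y) ^ (-(1 / 2) : ℝ) * (1 - y) ^ (-(1 / 2) : ℝ) := by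
    rw [← Real.mul_rpow hp.le hm.le]; ring_nf
  have hp1 : (((1 + y) ^ (1 / 2 : ℝ) * (1 + y) ^ (-(1 / 2) : ℝ) : ℝ) : ℂ) = 1 := by
    rw [← Real.rpow_add hp]; norm_num
  have hm1 : (((1 - y) ^ (1 / 2 : ℝ) * (1 - y) ^ (-(1 / 2) : ℝ) : ℝ) : ℂ) = 1 := by
    rw [← Real.rpow_add hm]; norm_num
  have hp2 := congrArg ((↑) : ℝ → ℂ) (Real.rpow_neg_half_sq hp.le)
  have hm2 := congrArg ((↑) : ℝ → ℂ) (Real.rpow_neg_half_sq hm.le)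
  rw [hC] at hu hv ⊢
  set a := (1 + y) ^ (-(1 / 2) : ℝ)
  set b := (1 - y) ^ (-(1 / 2) : ℝ)
  set a' := (1 + y) ^ (1 / 2 : ℝ)
  set b' := (1 - y) ^ (1 / 2 : ℝ)
  push_cast at hu hv hp1 hm1 hp2 hm2 ⊢
  constructor
  · linear_combination (-I * a) * hu - deriv u y * hp1 + (a * a' * deriv u y) * I_sq
      - (I * a * b * rfun u v y * u y) * hp2
  · linear_combination (I * b) * hv - deriv v y * hm1 + (b * b' * deriv v y) * I_sq
      + (I * a * b * rfun u v y * v y) * hm2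

theorem SolvesS'11.deriv_div_eq (hS : SolvesS'11 u v J) (hy : y ∈ J)
    (hy1 : y ∈ Ioo (-1 : ℝ) 1) (hu : u y ≠ 0) (hv : v y ≠ 0) :
    deriv u y / u y = -I * ((1 - y ^ 2) ^ (-(1 / 2) : ℝ) : ℝ)
        * (Qfun u v y * (v y / u y) + rfun u v y * ((1 + y)⁻¹ : ℝ)) ∧
      deriv v y / v y = I * ((1 - y ^ 2) ^ (-(1 / 2) : ℝ) : ℝ)
        * (Qfun u v y * (u y / v y) + rfun u v y * ((1 - y)⁻¹ : ℝ)) := by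
  obtain ⟨hu', hv'⟩ := hS.deriv_eq hy hy1
  constructor
  · rw [hu']; field_simp
  · rw [hv']; field_simp

theorem SolvesS'11.deriv_div_eq_of_polar {θ : ℝ} (hS : SolvesS'11 u v J) (hy : y ∈ J)
    (hy1 : y ∈ Ioo (-1 : ℝ) 1) (hv : v y ≠ 0) (heq : ‖u y‖ = ‖v y‖)
    (hθ : (starRingEnd ℂ) (u y) * v y = ((‖u y‖ * ‖v y‖ : ℝ) : ℂ) * Complex.exp (I * θ)) :
    deriv u y / u y = -I * ((1 - y ^ 2) ^ (-(1 / 2) : ℝ) : ℝ)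
        * (((‖v y‖ ^ 2 * ((1 + y)⁻¹ + (1 - y)⁻¹) : ℝ) : ℂ) * (Real.cos θ + Real.sin θ * I)
          + ((2 * ‖v y‖ ^ 2 * Real.cos θ : ℝ) : ℂ) * ((1 + y)⁻¹ : ℝ)) ∧
      deriv v y / v y = I * ((1 - y ^ 2) ^ (-(1 / 2) : ℝ) : ℝ)
        * (((‖v y‖ ^ 2 * ((1 + y)⁻¹ + (1 - y)⁻¹) : ℝ) : ℂ) * (Real.cos θ - Real.sin θ * I)
          + ((2 * ‖v y‖ ^ 2 * Real.cos θ : ℝ) : ℂ) * ((1 - y)⁻¹ : ℝ)) := by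
  have hu : u y ≠ 0 := norm_ne_zero_iff.mp (heq ▸ norm_ne_zero_iff.mpr hv)
  have hvu := Complex.div_eq_cos_add_sin_mul_I hu heq hθ
  have huv : u y / v y = Real.cos θ - Real.sin θ * I := by
    rw [← inv_div, hvu, Complex.inv_cos_add_sin_mul_I]
  have hQ : Qfun u v y = ‖v y‖ ^ 2 * ((1 + y)⁻¹ + (1 - y)⁻¹) := by rw [Qfun, heq]; ring
  have hr : rfun u v y = (2 * ‖v y‖ ^ 2 * Real.cos θ : ℝ) := by
    rw [rfun_eq_two_mul_re, hθ, heq, mul_comm I, re_ofReal_mul, exp_ofReal_mul_I_re]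
    ring_nf
  rw [← hvu, ← huv, ← hr, ← hQ]
  exact hS.deriv_div_eq hy hy1 hu hv

end SolvesS'11

/-- for `k = ℓ = 1`, along a solution of (S') with `|u| = |v| ≠ 0`
and continuous relative phase `θ` (i.e. `conj(u) v = |u||v| e^{iθ}`), the
modulus and phase satisfy `(|v|)' = 2|v|³ sin θ (1-y²)^{-3/2}` and
`θ' = 8|v|² cos θ (1-y²)^{-3/2}`. -/
theorem reduced_modulus_phase_system (u v : ℝ → ℂ) (a b : ℝ)
    (hab : Ioo a b ⊆ Ioo (-1 : ℝ) 1)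
    (hS : SolvesS'11 u v (Ioo a b))
    (heq : ∀ y ∈ Ioo a b, ‖u y‖ = ‖v y‖)
    (hne : ∀ y ∈ Ioo a b, v y ≠ 0)
    (θ : ℝ → ℝ) (hθc : ContinuousOn θ (Ioo a b))
    (hθ : ∀ y ∈ Ioo a b,
      (starRingEnd ℂ) (u y) * v y
        = ((‖u y‖ * ‖v y‖ : ℝ) : ℂ) * Complex.exp (Complex.I * θ y)) :
    ∀ y ∈ Ioo a b,
      HasDerivAt (fun s => ‖v s‖)
        (2 * ‖v y‖ ^ 3 * Real.sin (θ y) * (1 - y ^ 2) ^ (-(3 / 2) : ℝ)) y ∧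
      HasDerivAt θ
        (8 * ‖v y‖ ^ 2 * Real.cos (θ y) * (1 - y ^ 2) ^ (-(3 / 2) : ℝ)) y := by
  intro y hy
  have hJ : Ioo a b ∈ 𝓝 y := isOpen_Ioo.mem_nhds hy
  have hv0 := hne y hy
  have hu0 : u y ≠ 0 := norm_ne_zero_iff.mp (heq y hy ▸ norm_ne_zero_iff.mpr hv0)
  have hdu := ((hS.1.contDiffAt hJ).differentiableAt one_ne_zero).hasDerivAt
  have hdv := ((hS.2.1.contDiffAt hJ).differentiableAt one_ne_zero).hasDerivAt
  have hpolar : ∀ᶠ t in 𝓝 y, star (u t) * v t = ‖star (u t) * v t‖ * Complex.exp (θ t * I) := by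
    filter_upwards [hJ] with t ht
    rw [norm_mul, norm_star, mul_comm _ I]
    exact hθ t ht
  obtain ⟨hlogu, hlogv⟩ := hS.deriv_div_eq_of_polar hy (hab hy) hv0 (heq y hy) (hθ y hy)
  have hC2 := inv_one_add_add_inv_one_sub (hab hy)
  rw [Real.rpow_neg_three_halves (by nlinarith [(hab hy).1, (hab hy).2])]
  set C := (1 - y ^ 2) ^ (-(1 / 2) : ℝ)
  refine ⟨(hdv.norm hv0).congr_deriv ?_,
    ((hdu.star.mul hdv).polar_angle (mul_ne_zero (star_ne_zero.mpr hu0) hv0)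
      (hθc.continuousAt hJ) hpolar).congr_deriv ?_⟩
  · rw [hlogv]
    simp only [mul_re, mul_im, add_re, add_im, sub_re, sub_im, I_re, I_im, ofReal_re, ofReal_im]
    linear_combination (‖v y‖ ^ 3 * C * Real.sin (θ y)) * hC2
  · rw [Pi.mul_apply, star_mul_add_star_mul_div_star_mul hu0 hv0, hlogu, hlogv]
    simp only [star_mul', star_add, star_neg, Complex.star_def, conj_I, conj_ofReal, mul_re,
      mul_im, add_re, add_im, sub_re, sub_im, I_re, I_im, ofReal_re, ofReal_im, neg_re, neg_im]
    linear_combination (4 * ‖v y‖ ^ 2 * C * Real.cos (θ y)) * hC2
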